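/- arXiv:1910.10425 — 4 statements merged into one kernel-verified Lean document; each statement's English description precedes it below -/
import Mathlib

section
/- For any δ ∈ (0, 1/2] and any n₋ > 0, there exists a constant C₂ = C₂(n₋, δ) > 0 such that for all n₁ > 0 and all n₂ with n₋/2 < n₂ < n₋, if |n₁/n₂ − 1| ≥ δ then (1/C₂)·(1 + n₁ log⁺(n₁/n₂)) ≤ Π(n₁|n₂) ≤ C₂·(1 + n₁ log⁺(n₁/n₂)), where log⁺(y) = max(log y, 0). -/
noncomputable def entPi (n : ℝ) : ℝ := n * Real.log n - n

noncomputable def relPi (n₁ n₂ : ℝ) : ℝ :=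
  entPi n₁ - entPi n₂ - Real.log n₂ * (n₁ - n₂)

noncomputable def logPlus (y : ℝ) : ℝ := max (Real.log y) 0

lemma phi_ge_sq (r : ℝ) (hr : 0 < r) :
    (Real.sqrt r - 1)^2 ≤ r * Real.log r - r + 1 := by
  set s := Real.sqrt r with hsdef
  have hs : 0 < s := Real.sqrt_pos.2 hr
  have hsq : s ^ 2 = r := Real.sq_sqrt hr.le
  have hlog : Real.log r = 2 * Real.log s := by
    rw [hsdef, Real.log_sqrt hr.le]; ring
  have hsi : s * s⁻¹ = 1 := mul_inv_cancel₀ hs.ne'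
  have hls : s - 1 ≤ s * Real.log s := by
    have h := Real.log_le_sub_one_of_pos (show (0:ℝ) < s⁻¹ by positivity)
    rw [Real.log_inv] at h
    have h2 := mul_le_mul_of_nonneg_left h hs.le
    nlinarith
  rw [hlog, ← hsq]
  nlinarith [mul_le_mul_of_nonneg_left hls hs.le]

lemma phi_bounds (δ r : ℝ) (hδ0 : 0 < δ) (hδ2 : δ ≤ 1/2) (hr : 0 < r)
    (hfar : δ ≤ |r - 1|) :
    δ^2 / (16 * (1 + 2 * Real.exp 2)) * (1 + r * logPlus r) ≤ r * Real.log r - r + 1 ∧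
    r * Real.log r - r + 1 ≤ 1 + r * logPlus r := by
  have hE : (1:ℝ) ≤ Real.exp 2 := by
    have := Real.add_one_le_exp (2:ℝ); linarith
  have hK : (0:ℝ) < 16 * (1 + 2 * Real.exp 2) := by nlinarith
  have hLub : Real.log r ≤ logPlus r := le_max_left _ _
  have hL0 : 0 ≤ logPlus r := le_max_right _ _
  constructor
  · -- lower bound
    rcases le_or_gt r 1 with h1 | h1
    · -- r ≤ 1 - δ
      have hrd : r ≤ 1 - δ := by
        rw [abs_sub_comm, abs_of_nonneg (by linarith)] at hfar; linarith
      have hL : logPlus r = 0 := max_eq_right (Real.log_nonpos hr.le h1)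
      have hsq := phi_ge_sq r hr
      have hsle : Real.sqrt r ≤ 1 - δ/2 := by
        have h2 : r ≤ (1 - δ/2)^2 := by nlinarith
        calc Real.sqrt r ≤ Real.sqrt ((1-δ/2)^2) := Real.sqrt_le_sqrt h2
          _ = 1 - δ/2 := by rw [Real.sqrt_sq (by linarith)]
      have hphi : δ^2/4 ≤ r * Real.log r - r + 1 := by nlinarith
      rw [hL]
      rw [div_mul_eq_mul_div, div_le_iff₀ hK]
      nlinarith
    · -- r ≥ 1 + δ
      have hrd : 1 + δ ≤ r := by
        rw [abs_of_nonneg (by linarith)] at hfar; linarith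
      have hlog0 : 0 ≤ Real.log r := Real.log_nonneg h1.le
      have hL : logPlus r = Real.log r := max_eq_left hlog0
      rw [hL]
      rcases le_or_gt r (Real.exp 2) with h2 | h2
      · -- 1+δ ≤ r ≤ e²
        have hsq := phi_ge_sq r hr
        have hsge : 1 + δ/3 ≤ Real.sqrt r := by
          have h3 : (1 + δ/3)^2 ≤ r := by nlinarith
          calc (1:ℝ) + δ/3 = Real.sqrt ((1+δ/3)^2) := by
                rw [Real.sqrt_sq (by linarith)]
            _ ≤ Real.sqrt r := Real.sqrt_le_sqrt h3
        have hphi : δ^2/9 ≤ r * Real.log r - r + 1 := by nlinarith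
        have hlog2 : Real.log r ≤ 2 := by
          calc Real.log r ≤ Real.log (Real.exp 2) := Real.log_le_log hr h2
            _ = 2 := Real.log_exp 2
        have hrl : r * Real.log r ≤ Real.exp 2 * 2 :=
          mul_le_mul h2 hlog2 hlog0 (by positivity)
        rw [div_mul_eq_mul_div, div_le_iff₀ hK]
        nlinarith
      · -- r > e²
        have hlog2 : (2:ℝ) ≤ Real.log r := by
          rw [← Real.log_exp 2]; exact Real.log_le_log (Real.exp_pos 2) h2.le
        have hr1 : (1:ℝ) < r := by nlinarith
        have hrl1 : (2:ℝ) ≤ r * Real.log r := by nlinarith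
        have hphi : (1/4) * (1 + r * Real.log r) ≤ r * Real.log r - r + 1 := by
          nlinarith
        have hc : δ^2 / (16 * (1 + 2 * Real.exp 2)) ≤ 1/4 := by
          rw [div_le_iff₀ hK]; nlinarith
        nlinarith
  · -- upper bound
    nlinarith [mul_le_mul_of_nonneg_left hLub hr.le]

set_option maxHeartbeats 1000000 in
theorem relPi_log_far (δ nminus : ℝ) (hδ : δ ∈ Set.Ioc (0 : ℝ) (1/2))
    (hn : 0 < nminus) :
    ∃ C₂ > 0, ∀ n₁ n₂ : ℝ, 0 < n₁ → nminus / 2 < n₂ → n₂ < nminus →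
      δ ≤ |n₁ / n₂ - 1| →
      (1 / C₂) * (1 + n₁ * logPlus (n₁ / n₂)) ≤ relPi n₁ n₂ ∧
      relPi n₁ n₂ ≤ C₂ * (1 + n₁ * logPlus (n₁ / n₂)) := by
  obtain ⟨hδ0, hδ2⟩ := hδ
  have hδne : δ ≠ 0 := ne_of_gt hδ0
  have hnne : nminus ≠ 0 := ne_of_gt hn
  have hE : (1:ℝ) ≤ Real.exp 2 := by
    have := Real.add_one_le_exp (2:ℝ); linarith
  have hEne : (1 + 2 * Real.exp 2) ≠ 0 := by nlinarith
  have hM1 : (1:ℝ) ≤ max 1 nminus := le_max_left _ _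
  have hMn : nminus ≤ max 1 nminus := le_max_right _ _
  set A : ℝ := 32 * max 1 nminus * (1 + 2 * Real.exp 2) / (nminus * δ^2) with hAdef
  have hA : 0 < A := by
    apply div_pos
    · nlinarith
    · positivity
  refine ⟨max (max 2 nminus) A, lt_of_lt_of_le hA (le_max_right _ _), ?_⟩
  intro n₁ n₂ hn₁ hn₂l hn₂u hfar
  set C : ℝ := max (max 2 nminus) A with hCdef
  have hC2 : (2:ℝ) ≤ C := le_trans (le_max_left _ _) (le_max_left _ _)
  have hCn : nminus ≤ C := le_trans (le_max_right _ _) (le_max_left _ _)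
  have hCA : A ≤ C := le_max_right _ _
  have hC0 : 0 < C := by linarith
  have hn₂ : 0 < n₂ := lt_trans (by linarith) hn₂l
  set r : ℝ := n₁ / n₂ with hrdef
  have hr : 0 < r := div_pos hn₁ hn₂
  obtain ⟨hlow, hupp⟩ := phi_bounds δ r hδ0 hδ2 hr hfar
  have hrel : relPi n₁ n₂ = n₂ * (r * Real.log r - r + 1) := by
    unfold relPi entPi
    rw [hrdef, Real.log_div hn₁.ne' hn₂.ne']
    field_simp
    ring
  have hLid : n₁ * logPlus r = n₂ * (r * logPlus r) := by
    rw [hrdef]; field_simp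
  have hL0 : 0 ≤ logPlus r := le_max_right _ _
  have hrL0 : 0 ≤ r * logPlus r := mul_nonneg hr.le hL0
  set c : ℝ := δ^2 / (16 * (1 + 2 * Real.exp 2)) with hcdef
  set L : ℝ := logPlus r with hLdef
  constructor
  · -- lower bound
    rw [hrel, hLid]
    have step1 : 1 + n₂ * (r * L) ≤ max 1 nminus * (1 + r * L) := by
      have : n₂ * (r * L) ≤ max 1 nminus * (r * L) :=
        mul_le_mul_of_nonneg_right (by linarith) hrL0
      nlinarith
    have step2 : max 1 nminus * (1 + r * L) =
        A * ((nminus/2) * (c * (1 + r * L))) := by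
      rw [hAdef, hcdef]
      field_simp
      ring
    have step3 : (nminus/2) * (c * (1 + r * L)) ≤ n₂ * (r * Real.log r - r + 1) := by
      have hc0 : 0 ≤ c := by rw [hcdef]; positivity
      have h1 : 0 ≤ c * (1 + r * L) := by
        apply mul_nonneg hc0; nlinarith
      have h2 : (nminus/2) * (c * (1 + r * L)) ≤ n₂ * (c * (1 + r * L)) :=
        mul_le_mul_of_nonneg_right (by linarith) h1
      have h3 : n₂ * (c * (1 + r * L)) ≤ n₂ * (r * Real.log r - r + 1) :=
        mul_le_mul_of_nonneg_left hlow hn₂.le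
      linarith
    have hX0 : (0:ℝ) < 1 + n₂ * (r * L) := by nlinarith
    have h4 : (1/C) * (1 + n₂ * (r * L)) ≤ (1/A) * (1 + n₂ * (r * L)) :=
      mul_le_mul_of_nonneg_right (one_div_le_one_div_of_le hA hCA) hX0.le
    have h5 : (1/A) * (1 + n₂ * (r * L)) ≤ (nminus/2) * (c * (1 + r * L)) := by
      rw [div_mul_eq_mul_div, one_mul, div_le_iff₀ hA]
      have := step1
      rw [step2] at this
      linarith [this]
    linarith
  · -- upper bound
    rw [hrel, hLid]
    have h1 : n₂ * (r * Real.log r - r + 1) ≤ n₂ * (1 + r * L) :=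
      mul_le_mul_of_nonneg_left hupp hn₂.le
    have h2 : n₂ * (1 + r * L) = n₂ + n₂ * (r * L) := by ring
    have hx : 0 ≤ n₂ * (r * L) := mul_nonneg hn₂.le hrL0
    have h3 : C * (1 + n₂ * (r * L)) = C + C * (n₂ * (r * L)) := by ring
    nlinarith
end

section
/- For any δ ∈ (0, 1/2] and any n₋ > 0, there exists a constant C₃ = C₃(n₋, δ) > 0 such that for all n₁ > 0 and all n₂ with n₋/2 < n₂ < n₋, if |n₁/n₂ − 1| ≥ δ then (1/C₃)·|n₁ − n₂| ≤ Π(n₁|n₂) ≤ C₃·|n₁ − n₂|². -/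
lemma key_upper (t : ℝ) (ht : 0 < t) :
    t * Real.log t - t + 1 ≤ (t - 1) ^ 2 := by
  have h := Real.log_le_sub_one_of_pos ht
  nlinarith [mul_le_mul_of_nonneg_left h ht.le]

lemma key_sqrt (t : ℝ) (ht : 0 < t) :
    (Real.sqrt t - 1) ^ 2 ≤ t * Real.log t - t + 1 := by
  set s := Real.sqrt t with hs
  have hspos : 0 < s := Real.sqrt_pos.mpr ht
  have hsq : s ^ 2 = t := Real.sq_sqrt ht.le
  have hlog : Real.log s = Real.log t / 2 := Real.log_sqrt ht.le
  have hlt : Real.log t = 2 * Real.log s := by rw [hlog]; ring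
  have h1 : 1 - s⁻¹ ≤ Real.log s := Real.one_sub_inv_le_log_of_pos hspos
  have hinv : s ^ 2 * s⁻¹ = s := by field_simp
  have key : 2 * s ^ 2 - 2 * s ≤ s ^ 2 * Real.log t := by
    have h2 := mul_le_mul_of_nonneg_left h1 (by positivity : (0:ℝ) ≤ 2 * s ^ 2)
    rw [hlt]
    nlinarith [h2]
  have h2' : s ^ 2 * Real.log t = t * Real.log t := by rw [hsq]
  nlinarith [key, h2', hsq]

lemma key_lower (t δ : ℝ) (ht : 0 < t) (hδ : 0 < δ) (hδ2 : δ ≤ 1/2)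
    (h : δ ≤ |t - 1|) :
    (δ / 8) * |t - 1| ≤ t * Real.log t - t + 1 := by
  have hkey := key_sqrt t ht
  have hspos : 0 < Real.sqrt t := Real.sqrt_pos.mpr ht
  have hsq : (Real.sqrt t) ^ 2 = t := Real.sq_sqrt ht.le
  set s := Real.sqrt t
  rcases abs_cases (t - 1) with ⟨he, hc⟩ | ⟨he, hc⟩
  · -- t ≥ 1, so t - 1 ≥ δ
    rw [he] at h ⊢
    have hs1 : 1 ≤ s := by nlinarith [sq_nonneg (s - 1), sq_nonneg (s + 1)]
    have hs3 : 1 + δ / 3 ≤ s := by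
      nlinarith [mul_nonneg (sub_nonneg.mpr hs1) hδ.le, sq_nonneg (s - 1 - δ/3)]
    have hA : 0 ≤ 8 * (s - 1) - δ * (s + 1) := by
      nlinarith [mul_nonneg (by linarith : (0:ℝ) ≤ 8 - δ) (by linarith : 0 ≤ s - (1 + δ/3)),
        mul_nonneg hδ.le (by linarith : (0:ℝ) ≤ 2 - δ)]
    have main : δ / 8 * (t - 1) ≤ (s - 1) ^ 2 := by
      rw [← hsq]
      nlinarith [mul_nonneg (sub_nonneg.mpr hs1) hA]
    linarith [hkey]
  · -- t ≤ 1, so 1 - t ≥ δ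
    rw [he] at h ⊢
    have hs0 : 0 ≤ s := hspos.le
    have hs1 : s ≤ 1 - δ / 2 := by
      nlinarith [sq_nonneg (s - 1 + δ/2)]
    have main : δ / 8 * -(t - 1) ≤ (s - 1) ^ 2 := by
      rw [← hsq]
      nlinarith [mul_nonneg hδ.le (by linarith : 0 ≤ 1 - δ/2 - s)]
    linarith [hkey]

theorem relPi_linear_quadratic_far (δ nminus : ℝ) (hδ : δ ∈ Set.Ioc (0 : ℝ) (1/2))
    (hn : 0 < nminus) :
    ∃ C₃ > 0, ∀ n₁ n₂ : ℝ, 0 < n₁ → nminus / 2 < n₂ → n₂ < nminus →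
      δ ≤ |n₁ / n₂ - 1| →
      (1 / C₃) * |n₁ - n₂| ≤ relPi n₁ n₂ ∧ relPi n₁ n₂ ≤ C₃ * |n₁ - n₂| ^ 2 := by
  obtain ⟨hδ0, hδ2⟩ := hδ
  refine ⟨8 / δ + 2 / nminus, by positivity, ?_⟩
  intro n₁ n₂ h1 h2 h3 habs
  have h2pos : 0 < n₂ := lt_trans (by positivity) h2
  set t := n₁ / n₂ with htdef
  have htpos : 0 < t := div_pos h1 h2pos
  have hn1 : n₁ = t * n₂ := (div_mul_cancel₀ n₁ h2pos.ne').symm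
  have hrel : relPi n₁ n₂ = n₂ * (t * Real.log t - t + 1) := by
    have hlog : Real.log n₁ = Real.log t + Real.log n₂ := by
      rw [hn1, Real.log_mul htpos.ne' h2pos.ne']
    have hrfl : relPi n₁ n₂ = (n₁ * Real.log n₁ - n₁) - (n₂ * Real.log n₂ - n₂)
        - Real.log n₂ * (n₁ - n₂) := rfl
    rw [hrfl, hlog, hn1]; ring
  have hdiff : |n₁ - n₂| = n₂ * |t - 1| := by
    have hd : n₁ - n₂ = n₂ * (t - 1) := by rw [hn1]; ring
    rw [hd, abs_mul, abs_of_pos h2pos]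
  have hlow := key_lower t δ htpos hδ0 hδ2 habs
  have hup := key_upper t htpos
  have hC : (0:ℝ) < 8 / δ + 2 / nminus := by positivity
  constructor
  · rw [hrel, hdiff]
    have hle : 1 / (8 / δ + 2 / nminus) ≤ δ / 8 := by
      rw [div_le_div_iff₀ hC (by norm_num)]
      have h8 : δ * (8 / δ) = 8 := by field_simp
      have : 0 ≤ δ * (2 / nminus) := by positivity
      nlinarith
    calc 1 / (8 / δ + 2 / nminus) * (n₂ * |t - 1|)
        ≤ δ / 8 * (n₂ * |t - 1|) := by
          apply mul_le_mul_of_nonneg_right hle (by positivity)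
      _ = n₂ * (δ / 8 * |t - 1|) := by ring
      _ ≤ n₂ * (t * Real.log t - t + 1) :=
          mul_le_mul_of_nonneg_left hlow h2pos.le
  · rw [hrel, hdiff]
    have h2n : 1 / n₂ ≤ 2 / nminus := by
      rw [div_le_div_iff₀ h2pos hn]
      linarith
    calc n₂ * (t * Real.log t - t + 1)
        ≤ n₂ * (t - 1) ^ 2 := mul_le_mul_of_nonneg_left hup h2pos.le
      _ = (1 / n₂) * (n₂ * |t - 1|) ^ 2 := by
          rw [mul_pow, sq_abs]; field_simp
      _ ≤ (2 / nminus) * (n₂ * |t - 1|) ^ 2 := by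
          apply mul_le_mul_of_nonneg_right h2n (by positivity)
      _ ≤ (8 / δ + 2 / nminus) * (n₂ * |t - 1|) ^ 2 := by
          apply mul_le_mul_of_nonneg_right _ (by positivity)
          have : 0 ≤ 8 / δ := by positivity
          linarith
end

section
/- Let f : ℝ → ℝ be differentiable with f = f₁ + f₂ and |f'| ≤ g₁ + g₂ pointwise, where f₁, g₁ ∈ L¹(ℝ) and f₂, g₂ ∈ L∞(ℝ). Then f ∈ L∞(ℝ) and ‖f‖_{L∞} ≤ 2(‖f₁‖_{L¹} + ‖f₂‖_{L∞} + ‖g₁‖_{L¹} + ‖g₂‖_{L∞}). -/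
open MeasureTheory Set

theorem linfty_decomposition_bound
    (f f₁ f₂ g₁ g₂ : ℝ → ℝ) (M₂ N₂ : ℝ)
    (hdiff : Differentiable ℝ f)
    (hsum : ∀ x, f x = f₁ x + f₂ x)
    (hder : ∀ x, |deriv f x| ≤ g₁ x + g₂ x)
    (hf₁ : Integrable f₁) (hg₁ : Integrable g₁)
    (hf₂ : ∀ x, |f₂ x| ≤ M₂) (hg₂ : ∀ x, |g₂ x| ≤ N₂) :
    ∀ x, |f x| ≤ 2 * ((∫ y, |f₁ y|) + M₂ + (∫ y, |g₁ y|) + N₂) := by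
  intro x
  set a := x - 1 with ha
  have hax : a ≤ x := by simp [ha]
  have hvol : volume (Icc a x) = 1 := by
    rw [Real.volume_Icc]; norm_num [ha]
  have hvol_lt : volume (Icc a x) < ⊤ := by rw [hvol]; exact ENNReal.one_lt_top
  have hM₂ : 0 ≤ M₂ := le_trans (abs_nonneg _) (hf₂ 0)
  have hN₂ : 0 ≤ N₂ := le_trans (abs_nonneg _) (hg₂ 0)
  have hIf₁ : 0 ≤ ∫ y, |f₁ y| := integral_nonneg fun y => abs_nonneg _
  have hIg₁ : 0 ≤ ∫ y, |g₁ y| := integral_nonneg fun y => abs_nonneg _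
  have hf1abs : IntegrableOn (fun y => |f₁ y|) (Icc a x) := hf₁.abs.integrableOn
  have hconst : ∀ c : ℝ, IntegrableOn (fun _ : ℝ => c) (Icc a x) :=
    fun c => integrableOn_const hvol_lt.ne
  -- existence of a good point y
  have hex : ∃ y ∈ Icc a x, |f₁ y| ≤ ∫ z in Icc a x, |f₁ z| := by
    by_contra h
    push_neg at h
    set I := ∫ z in Icc a x, |f₁ z| with hI
    have hInt : IntegrableOn (fun y => |f₁ y| - I) (Icc a x) := hf1abs.sub (hconst I)
    have hpos : 0 < ∫ y in Icc a x, (|f₁ y| - I) := by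
      rw [setIntegral_pos_iff_support_of_nonneg_ae]
      · have hsub : Icc a x ⊆ Function.support (fun y => |f₁ y| - I) := by
          intro y hy
          exact ne_of_gt (sub_pos.2 (h y hy))
        calc (0 : ENNReal) < 1 := by norm_num
          _ = volume (Icc a x) := hvol.symm
          _ ≤ volume (Function.support (fun y => |f₁ y| - I) ∩ Icc a x) := by
              apply measure_mono; intro y hy; exact ⟨hsub hy, hy⟩
      · refine (ae_restrict_iff' measurableSet_Icc).2 (Filter.Eventually.of_forall ?_)
        intro y hy; exact (sub_pos.2 (h y hy)).le
      · exact hInt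
    have hzero : ∫ y in Icc a x, (|f₁ y| - I) = 0 := by
      rw [integral_sub hf1abs (hconst I), setIntegral_const, measureReal_def, hvol]
      simp [hI]
    linarith
  obtain ⟨y, hy, hyle⟩ := hex
  have hyx : y ≤ x := hy.2
  -- deriv f integrable on Icc a x
  have hbound : ∀ z, ‖deriv f z‖ ≤ |g₁ z| + N₂ := by
    intro z
    have := hder z
    have h1 : g₁ z ≤ |g₁ z| := le_abs_self _
    have h2 : g₂ z ≤ N₂ := le_trans (le_abs_self _) (hg₂ z)
    simpa [Real.norm_eq_abs] using le_trans this (by linarith)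
  have hgN : IntegrableOn (fun z => |g₁ z| + N₂) (Icc a x) :=
    hg₁.abs.integrableOn.add (hconst N₂)
  have hderint : IntegrableOn (deriv f) (Icc a x) :=
    hgN.mono' (measurable_deriv f).aestronglyMeasurable
      (Filter.Eventually.of_forall fun z => hbound z)
  have hii : IntervalIntegrable (deriv f) volume y x := by
    apply (hderint.mono_set _).intervalIntegrable
    rw [uIcc_of_le hyx]
    exact Icc_subset_Icc hy.1 le_rfl
  have hftc : ∫ z in y..x, deriv f z = f x - f y :=
    intervalIntegral.integral_deriv_eq_sub (fun z _ => hdiff z) hii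
  -- bound |f x - f y|
  have hstep : |f x - f y| ≤ (∫ z in Icc a x, |g₁ z|) + N₂ := by
    rw [← hftc]
    calc |∫ z in y..x, deriv f z| ≤ ∫ z in y..x, |deriv f z| :=
          intervalIntegral.abs_integral_le_integral_abs hyx
      _ = ∫ z in Ioc y x, |deriv f z| := intervalIntegral.integral_of_le hyx
      _ ≤ ∫ z in Icc a x, |deriv f z| := by
          apply setIntegral_mono_set hderint.abs
          · exact Filter.Eventually.of_forall fun z => abs_nonneg _
          · exact HasSubset.Subset.eventuallyLE
              ((Ioc_subset_Icc_self).trans (Icc_subset_Icc hy.1 le_rfl))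
      _ ≤ ∫ z in Icc a x, (|g₁ z| + N₂) := by
          apply setIntegral_mono_on hderint.abs hgN measurableSet_Icc
          intro z _; simpa [Real.norm_eq_abs] using hbound z
      _ = (∫ z in Icc a x, |g₁ z|) + N₂ := by
          rw [integral_add hg₁.abs.integrableOn (hconst N₂), setIntegral_const, measureReal_def, hvol]
          simp
  have hIcc_g : (∫ z in Icc a x, |g₁ z|) ≤ ∫ z, |g₁ z| :=
    setIntegral_le_integral hg₁.abs (Filter.Eventually.of_forall fun z => abs_nonneg _)
  have hIcc_f : (∫ z in Icc a x, |f₁ z|) ≤ ∫ z, |f₁ z| :=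
    setIntegral_le_integral hf₁.abs (Filter.Eventually.of_forall fun z => abs_nonneg _)
  have hfy : |f y| ≤ (∫ z, |f₁ z|) + M₂ := by
    rw [hsum y]
    calc |f₁ y + f₂ y| ≤ |f₁ y| + |f₂ y| := abs_add_le _ _
      _ ≤ (∫ z in Icc a x, |f₁ z|) + M₂ := add_le_add hyle (hf₂ y)
      _ ≤ (∫ z, |f₁ z|) + M₂ := by linarith
  have : |f x| ≤ |f y| + |f x - f y| := by
    calc |f x| = |f y + (f x - f y)| := by ring_nf
      _ ≤ |f y| + |f x - f y| := abs_add_le _ _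
  linarith
end

section
/- Let n : ℝ → ℝ be a nonnegative C¹ function with √n ∈ H¹_loc and suppose A := sup_{x∈ℝ} ∫_{x−1}^{x+1} n(y) dy < ∞ and B := ∫_ℝ |∂_x √n|² dx < ∞. Then n is bounded, with n(x) ≤ (3/2)·A + B for every x ∈ ℝ. -/
open MeasureTheory

theorem sup_bound_from_local_mass_and_dissipation
    (n : ℝ → ℝ) (A B : ℝ)
    (hn : ContDiff ℝ 1 n) (hpos : ∀ x, 0 ≤ n x)
    (hsq : Differentiable ℝ (fun x => Real.sqrt (n x)))
    (hA : ∀ x : ℝ, ∫ y in Set.Ioo (x - 1) (x + 1), n y ≤ A)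
    (hint : Integrable (fun x => (deriv (fun y => Real.sqrt (n y)) x) ^ 2))
    (hB : ∫ x : ℝ, (deriv (fun y => Real.sqrt (n y)) x) ^ 2 ≤ B) :
    ∀ x, n x ≤ (3 / 2) * A + B := by
  intro x
  set u : ℝ → ℝ := fun y => Real.sqrt (n y) with hu
  set S : Set ℝ := Set.Ioo (x - 1) (x + 1) with hS
  have hcderiv : Continuous (deriv n) := hn.continuous_deriv le_rfl
  have hncont : Continuous n := hn.continuous
  have hderiv_eq : ∀ t, deriv n t = 2 * u t * deriv u t := by
    intro t
    have hn_eq : n = fun z => u z ^ 2 := funext fun z => (Real.sq_sqrt (hpos z)).symm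
    conv_lhs => rw [hn_eq]
    have h : HasDerivAt (fun z => u z ^ 2) ((2 : ℕ) * u t ^ (2 - 1) * deriv u t) t :=
      ((hsq t).hasDerivAt).pow 2
    simpa using h.deriv
  have hptwise : ∀ t, |deriv n t| ≤ n t + (deriv u t) ^ 2 := by
    intro t
    rw [hderiv_eq]
    have h1 : |2 * u t * deriv u t| = 2 * |u t| * |deriv u t| := by
      rw [abs_mul, abs_mul]; norm_num
    have h2 : 2 * |u t| * |deriv u t| ≤ |u t| ^ 2 + |deriv u t| ^ 2 :=
      two_mul_le_add_sq _ _
    have h3 : |u t| ^ 2 = n t := by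
      rw [sq_abs]; exact Real.sq_sqrt (hpos t)
    rw [h1]
    calc 2 * |u t| * |deriv u t| ≤ |u t| ^ 2 + |deriv u t| ^ 2 := h2
      _ = n t + (deriv u t) ^ 2 := by rw [h3, sq_abs]
  have hIntabs : IntegrableOn (fun t => |deriv n t|) S :=
    (hcderiv.abs.continuousOn.integrableOn_Icc).mono_set Set.Ioo_subset_Icc_self
  have hIntn : IntegrableOn n S :=
    (hncont.continuousOn.integrableOn_Icc).mono_set Set.Ioo_subset_Icc_self
  have hIntu2 : IntegrableOn (fun t => deriv u t ^ 2) S := hint.integrableOn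
  have hgrad : ∫ t in S, |deriv n t| ≤ A + B := by
    have h1 : ∫ t in S, |deriv n t| ≤ ∫ t in S, (n t + deriv u t ^ 2) :=
      setIntegral_mono_on hIntabs (hIntn.add hIntu2) measurableSet_Ioo
        (fun t _ => hptwise t)
    have h2 : ∫ t in S, (n t + deriv u t ^ 2)
        = (∫ t in S, n t) + ∫ t in S, deriv u t ^ 2 := integral_add hIntn hIntu2
    have h3 : ∫ t in S, deriv u t ^ 2 ≤ ∫ t : ℝ, deriv u t ^ 2 :=
      setIntegral_le_integral hint (Filter.Eventually.of_forall fun t => sq_nonneg _)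
    have h4 := hA x
    linarith
  have key : ∀ y ∈ S, n x ≤ n y + (A + B) := by
    intro y hy
    have hftc : ∫ t in y..x, deriv n t = n x - n y :=
      intervalIntegral.integral_deriv_eq_sub
        (fun t _ => hn.differentiable one_ne_zero t) (hcderiv.intervalIntegrable y x)
    have hsub : Set.uIoc y x ⊆ S := by
      intro t ht
      rcases ht with ⟨ht1, ht2⟩
      have hx1 : x - 1 < x := by linarith
      have hx2 : x < x + 1 := by linarith
      constructor
      · calc x - 1 < min y x := lt_min hy.1 hx1
          _ < t := ht1
      · calc t ≤ max y x := ht2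
          _ < x + 1 := max_lt hy.2 hx2
    have habs : |∫ t in y..x, deriv n t| ≤ ∫ t in S, |deriv n t| := by
      calc |∫ t in y..x, deriv n t| ≤ ∫ t in Set.uIoc y x, |deriv n t| := by
            simpa only [Real.norm_eq_abs] using intervalIntegral.norm_integral_le_integral_norm_uIoc (f := deriv n) (a := y) (b := x) (μ := volume)
        _ ≤ ∫ t in S, |deriv n t| :=
            setIntegral_mono_set hIntabs
              (Filter.Eventually.of_forall fun t => abs_nonneg _)
              (HasSubset.Subset.eventuallyLE hsub)
    have : n x - n y ≤ A + B := by
      rw [← hftc]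
      calc ∫ t in y..x, deriv n t ≤ |∫ t in y..x, deriv n t| := le_abs_self _
        _ ≤ ∫ t in S, |deriv n t| := habs
        _ ≤ A + B := hgrad
    linarith
  have hvol : (volume S).toReal = 2 := by
    rw [hS, Real.volume_Ioo]
    norm_num
  have hconst : IntegrableOn (fun _ : ℝ => n x) S := by
    refine integrableOn_const ?_
    rw [hS]
    exact measure_Ioo_lt_top.ne
  have hconst2 : IntegrableOn (fun _ : ℝ => A + B) S := by
    refine integrableOn_const ?_
    rw [hS]
    exact measure_Ioo_lt_top.ne
  have h5 : ∫ _ in S, n x = 2 * n x := by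
    rw [setIntegral_const, measureReal_def, hvol, smul_eq_mul]
  have h6 : ∫ y in S, (fun _ : ℝ => n x) y ≤ ∫ y in S, (n y + (A + B)) :=
    setIntegral_mono_on hconst (hIntn.add hconst2) measurableSet_Ioo key
  have h7 : ∫ y in S, (n y + (A + B)) = (∫ y in S, n y) + 2 * (A + B) := by
    rw [integral_add hIntn hconst2, setIntegral_const, measureReal_def, hvol, smul_eq_mul]
  have h8 := hA x
  rw [h7] at h6
  rw [h5] at h6
  linarith
end
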